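/- arXiv:1312.0574 — 2 statements merged into one kernel-verified Lean document; each statement's English description precedes it below -/
import Mathlib

section
/- Let V be an abelian Lie algebra and 𝔤 = 𝔞 ⋉ V a Lie algebra with 𝔞 a Lie subalgebra of gl(V) acting naturally on V (so 𝔤 is the semidirect product). Then H^0(V, 𝔤) = V, and for every q ≥ 1 there is a vector space isomorphism H^q(V, 𝔤) ≅ ker ∂^q ⊕ Hom(Λ^q V, V)/im ∂^{q−1}, where ∂^q : Hom(Λ^q V, 𝔞) → Hom(Λ^{q+1} V, V) is the Spencer operator defined by (∂^q φ)(v₁ ∧ … ∧ v_{q+1}) = Σ_{i=1}^{q+1} (−1)^i φ(v₁ ∧ … ∧ v̂_i ∧ … ∧ v_{q+1})·v_i. -/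
/-!
The Chevalley–Eilenberg differential only reads the `𝔞`-component of a cochain and only writes
into the `V`-component: under `Hom(Λ^q V, 𝔞 × V) = Hom(Λ^q V, 𝔞) × Hom(Λ^q V, V)` it is
`(a, b) ↦ (0, ∂a)`. Hence the cocycles are `ker ∂^q × Hom(Λ^q V, V)`, the coboundaries are
`0 × im ∂^{q-1}`, and the cohomology splits as a product. In degree `0` the Spencer operator is
`φ ↦ (v ↦ -φ(1)·v)`, which is injective because `𝔞` acts faithfully, so `H⁰ = Hom(Λ⁰ V, V) = V`.
-/

/-- The wedge `v₁ ∧ ⋯ ∧ v_q`, as an element of the `q`-th exterior power. -/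
noncomputable def wedge {V : Type} [AddCommGroup V] [Module ℝ V] (q : ℕ)
    (v : Fin q → V) : ⋀[ℝ]^q V :=
  ⟨ExteriorAlgebra.ιMulti ℝ q v, ExteriorAlgebra.ιMulti_range ℝ q (Set.mem_range_self v)⟩

open LinearMap Submodule

noncomputable def Submodule.mapMkQEquivOfSurjective {R M W : Type*} [CommRing R]
    [AddCommGroup M] [Module R M] [AddCommGroup W] [Module R W]
    (p q : Submodule R M) (f : q →ₗ[R] W) (hf : Function.Surjective f)
    (hker : ker f = p.comap q.subtype) :
    map p.mkQ q ≃ₗ[R] W :=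
  let g : q →ₗ[R] map p.mkQ q := (p.mkQ ∘ₗ q.subtype).codRestrict _ fun x => mem_map_of_mem x.2
  have hg : Function.Surjective g := by
    rintro ⟨_, c, hc, rfl⟩
    exact ⟨⟨c, hc⟩, rfl⟩
  have hker_g : ker g = p.comap q.subtype := by
    ext x
    simp [g]
  (g.quotKerEquivOfSurjective hg).symm ≪≫ₗ quotEquivOfEq _ _ (hker_g.trans hker.symm) ≪≫ₗ
    f.quotKerEquivOfSurjective hf

section SplitDifferential

variable {R X Y Z A B : Type*} [CommRing R] [AddCommGroup X] [Module R X]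
  [AddCommGroup Y] [Module R Y] [AddCommGroup Z] [Module R Z]
  [AddCommGroup A] [Module R A] [AddCommGroup B] [Module R B]

def splitDifferential (s : (X →ₗ[R] A) →ₗ[R] (Y →ₗ[R] B)) :
    (X →ₗ[R] A × B) →ₗ[R] (Y →ₗ[R] A × B) :=
  compRight R (inr R A B) ∘ₗ s ∘ₗ compRight R (fst R A B)

variable {s : (X →ₗ[R] A) →ₗ[R] (Y →ₗ[R] B)}

theorem splitDifferential_apply (c : X →ₗ[R] A × B) :
    splitDifferential s c = inr R A B ∘ₗ s (fst R A B ∘ₗ c) :=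
  rfl

theorem mem_ker_splitDifferential {c : X →ₗ[R] A × B} :
    c ∈ ker (splitDifferential s) ↔ fst R A B ∘ₗ c ∈ ker s := by
  simp only [mem_ker, splitDifferential_apply]
  refine ⟨fun h => ?_, fun h => by rw [h, comp_zero]⟩
  simpa [← comp_assoc] using congrArg (snd R A B ∘ₗ ·) h

theorem mem_range_splitDifferential {c : Y →ₗ[R] A × B} :
    c ∈ range (splitDifferential s) ↔ fst R A B ∘ₗ c = 0 ∧ snd R A B ∘ₗ c ∈ range s := by
  constructor
  · rintro ⟨c', rfl⟩
    simp only [splitDifferential_apply, ← comp_assoc, fst_comp_inr, snd_comp_inr, zero_comp,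
      id_comp, mem_range_self, and_self]
  · rintro ⟨hfst, a, ha⟩
    refine ⟨a.prod 0, ?_⟩
    rw [splitDifferential_apply, fst_prod, ha]
    ext y
    · exact (LinearMap.congr_fun hfst y).symm
    · rfl

variable (s) in
noncomputable def kerSplitDifferentialEquiv :
    ker (splitDifferential s) ≃ₗ[R] ker s × (X →ₗ[R] B) where
  toFun c := (⟨fst R A B ∘ₗ c, mem_ker_splitDifferential.mp c.2⟩, snd R A B ∘ₗ c)
  invFun p := ⟨p.1.1.prod p.2, mem_ker_splitDifferential.mpr (by simp [p.1.2])⟩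
  map_add' _ _ := by ext <;> simp
  map_smul' _ _ := by ext <;> simp
  left_inv c := by ext <;> simp
  right_inv p := by ext <;> simp

variable (s) in
noncomputable def splitDifferentialCohomologyEquiv (t : (Y →ₗ[R] A) →ₗ[R] (Z →ₗ[R] B)) :
    map (range (splitDifferential s)).mkQ (ker (splitDifferential t)) ≃ₗ[R]
      ker t × ((Y →ₗ[R] B) ⧸ range s) :=
  mapMkQEquivOfSurjective _ _
    ((LinearMap.id.prodMap (range s).mkQ) ∘ₗ (kerSplitDifferentialEquiv t).toLinearMap)
    ((Function.surjective_id.prodMap (mkQ_surjective _)).comp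
      (kerSplitDifferentialEquiv t).surjective)
    (by
      ext c
      rw [mem_ker, mem_comap, subtype_apply, mem_range_splitDifferential]
      simp [kerSplitDifferentialEquiv, Prod.ext_iff])

end SplitDifferential

section Wedge

variable {V A B : Type} [AddCommGroup V] [Module ℝ V] [AddCommGroup A] [Module ℝ A]
  [AddCommGroup B] [Module ℝ B]

theorem linearMap_ext_wedge {q : ℕ} {f g : (⋀[ℝ]^q V) →ₗ[ℝ] A}
    (h : ∀ v, f (wedge q v) = g (wedge q v)) : f = g := by
  ext v
  exact h v

theorem eq_splitDifferential_of_apply_wedge {q : ℕ}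
    {D : ((⋀[ℝ]^q V) →ₗ[ℝ] A × B) →ₗ[ℝ] ((⋀[ℝ]^(q+1) V) →ₗ[ℝ] A × B)}
    {s : ((⋀[ℝ]^q V) →ₗ[ℝ] A) →ₗ[ℝ] ((⋀[ℝ]^(q+1) V) →ₗ[ℝ] B)}
    (h : ∀ c v, D c (wedge (q+1) v) = (0, s (fst ℝ A B ∘ₗ c) (wedge (q+1) v))) :
    D = splitDifferential s :=
  LinearMap.ext fun c => linearMap_ext_wedge fun v => h c v

theorem ker_eq_bot_of_apply_wedge_one {ρ : A →ₗ[ℝ] Module.End ℝ V} (hρ : Function.Injective ρ)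
    {s : ((⋀[ℝ]^0 V) →ₗ[ℝ] A) →ₗ[ℝ] ((⋀[ℝ]^1 V) →ₗ[ℝ] V)}
    (hs : ∀ φ (v : Fin 1 → V), s φ (wedge 1 v) =
      ∑ i : Fin 1, ((-1 : ℝ) ^ ((i : ℕ) + 1)) • ρ (φ (wedge 0 (v ∘ i.succAbove))) (v i)) :
    ker s = ⊥ := by
  refine eq_bot_iff.mpr fun φ hφ => linearMap_ext_wedge fun v => hρ ?_
  ext u
  have h := hs φ fun _ => u
  rw [mem_ker.mp hφ, Fin.sum_univ_one, Subsingleton.elim (_ ∘ _) v] at h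
  simpa [eq_comm] using h

variable (V) in
noncomputable def exteriorPowerZeroHomEquiv : ((⋀[ℝ]^0 V) →ₗ[ℝ] B) ≃ₗ[ℝ] B :=
  (exteriorPower.zeroEquiv ℝ V).arrowCongr (LinearEquiv.refl ℝ B) ≪≫ₗ ringLmapEquivSelf ℝ ℝ B

end Wedge

/-- Let `V` be an abelian Lie algebra and `𝔤 = 𝔞 ⋉ V` with
`𝔞 ⊆ gl(V)` a Lie subalgebra acting naturally on `V` (here `𝔞` is an abstract
module embedded in `gl(V)` by an injective map `ρ`, and the underlying space of
`𝔤` is `𝔞 × V`).  Let `∂^q : Hom(Λ^q V, 𝔞) → Hom(Λ^{q+1} V, V)` be the Spencer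
operator `(∂^q φ)(v₁ ∧ … ∧ v_{q+1}) = Σᵢ (−1)^i φ(v₁ ∧ … v̂ᵢ … ∧ v_{q+1})·vᵢ`,
and let `D^q : Hom(Λ^q V, 𝔤) → Hom(Λ^{q+1} V, 𝔤)` be the Chevalley–Eilenberg
differential of the abelian Lie algebra `V` with coefficients in `𝔤` (for a
cochain `c = c_𝔞 + c_V` it is the `V`-valued cochain `∂^q (c_𝔞)`).  Then
`H^0(V, 𝔤) = ker D^0 ≅ V`, and for every `q ≥ 1`,
`H^q(V, 𝔤) ≅ ker ∂^q ⊕ Hom(Λ^q V, V)/im ∂^{q−1}`. -/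
theorem cohomology_of_abelian_ideal_via_spencer
    (V 𝔞 : Type) [AddCommGroup V] [Module ℝ V] [AddCommGroup 𝔞] [Module ℝ 𝔞]
    (ρ : 𝔞 →ₗ[ℝ] Module.End ℝ V) (hρ : Function.Injective ρ)
    (sp : ∀ q : ℕ, ((⋀[ℝ]^q V) →ₗ[ℝ] 𝔞) →ₗ[ℝ] ((⋀[ℝ]^(q+1) V) →ₗ[ℝ] V))
    (hsp : ∀ (q : ℕ) (φ : (⋀[ℝ]^q V) →ₗ[ℝ] 𝔞) (v : Fin (q+1) → V),
      sp q φ (wedge (q+1) v) =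
        ∑ i : Fin (q+1), ((-1 : ℝ) ^ ((i : ℕ) + 1)) •
          (ρ (φ (wedge q (v ∘ i.succAbove))) (v i)))
    (D : ∀ q : ℕ, ((⋀[ℝ]^q V) →ₗ[ℝ] (𝔞 × V)) →ₗ[ℝ] ((⋀[ℝ]^(q+1) V) →ₗ[ℝ] (𝔞 × V)))
    (hD : ∀ (q : ℕ) (c : (⋀[ℝ]^q V) →ₗ[ℝ] (𝔞 × V)) (v : Fin (q+1) → V),
      D q c (wedge (q+1) v) =
        ∑ i : Fin (q+1), ((-1 : ℝ) ^ ((i : ℕ) + 1)) •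
          (((0 : 𝔞), ρ ((c (wedge q (v ∘ i.succAbove))).1) (v i)) : 𝔞 × V)) :
    -- H^0(V, 𝔤) = V
    Nonempty (↥(LinearMap.ker (D 0)) ≃ₗ[ℝ] V) ∧
    -- H^q(V, 𝔤) ≅ ker ∂^q ⊕ Hom(Λ^q V, V)/im ∂^{q−1} for q ≥ 1
    (∀ q : ℕ, Nonempty
      ((Submodule.map (LinearMap.range (D q)).mkQ (LinearMap.ker (D (q+1))))
        ≃ₗ[ℝ]
       (↥(LinearMap.ker (sp (q+1))) ×
        (((⋀[ℝ]^(q+1) V) →ₗ[ℝ] V) ⧸ LinearMap.range (sp q))))) := by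
  obtain rfl : D = fun q => splitDifferential (sp q) :=
    funext fun q => eq_splitDifferential_of_apply_wedge fun c v => by
      simp [hD, hsp, Prod.ext_iff, Prod.fst_sum, Prod.snd_sum]
  have hker : ker (sp 0) = ⊥ := ker_eq_bot_of_apply_wedge_one hρ (hsp 0)
  refine ⟨⟨?_⟩, fun q => ⟨splitDifferentialCohomologyEquiv (sp q) (sp (q+1))⟩⟩
  exact kerSplitDifferentialEquiv (sp 0) ≪≫ₗ
    (LinearEquiv.ofEq _ _ hker).prodCongr (exteriorPowerZeroHomEquiv V) ≪≫ₗ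
    LinearEquiv.uniqueProd
end

section
/- Let W = ℝ^m with m ≥ 2, let V_k = S^k(ℝ²) be the irreducible (k+1)-dimensional sl(2,ℝ)-module with k ≥ 3, and let 𝔞 = sl(2,ℝ) × gl(m,ℝ) ⊂ gl(V_k ⊗ W) act by the tensor product action. Then the first prolongation 𝔞^{(1)} = { φ ∈ Hom(V, 𝔞) : φ(u)v = φ(v)u for all u, v ∈ V } (where V = V_k ⊗ W) is zero; equivalently, the first Spencer operator ∂¹ : Hom(V, 𝔞) → Hom(Λ²V, V) is injective. -/
/-- The basis vector `v^i ⊗ e_j` of `V = V_k ⊗ W`, modelled as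
`Fin (k+1) → Fin m → ℝ`. -/
noncomputable def basisVec (k m : ℕ) (i : Fin (k + 1)) (j : Fin m) :
    Fin (k + 1) → Fin m → ℝ :=
  Pi.single i (Pi.single j 1)

lemma basisVec_apply (k m : ℕ) (i p : Fin (k + 1)) (j q : Fin m) :
    basisVec k m i j p q = if p = i ∧ q = j then 1 else 0 := by
  unfold basisVec
  rw [Pi.single_apply]
  split_ifs with h1 h2 h3 <;> simp_all [Pi.single_apply]

lemma basisVec_repr (k m : ℕ) (u : Fin (k + 1) → Fin m → ℝ) :
    u = ∑ i : Fin (k+1), ∑ j : Fin m, u i j • basisVec k m i j := by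
  funext p q
  simp only [Finset.sum_apply, Pi.smul_apply, basisVec_apply, smul_eq_mul, mul_ite, mul_one,
    mul_zero]
  simp [ite_and, Finset.sum_ite_eq]


set_option maxHeartbeats 1000000 in
/-- Let `W = ℝ^m` (`m ≥ 2`), `V_k = S^k(ℝ²)` (`k ≥ 3`), and let
`𝔞 = sl(2,ℝ) × gl(m,ℝ) ⊂ gl(V_k ⊗ W)` act by the tensor product action.
We model `V = V_k ⊗ W` as `Fin (k+1) → Fin m → ℝ` with basis
`v^i ⊗ e_j`; the image of `𝔞` in `gl(V)` is the span of the three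
`sl(2)`-generators `X, H, Y` together with the range of the embedding
`ι : gl(m,ℝ) → gl(V)`.  Then the first prolongation
`𝔞^{(1)} = { φ ∈ Hom(V, 𝔞) : φ(u)v = φ(v)u }` is zero; equivalently the first
Spencer operator `∂¹ : Hom(V,𝔞) → Hom(Λ²V, V)` is injective. -/
theorem first_prolongation_vanishes (k m : ℕ) (hk : 3 ≤ k) (hm : 2 ≤ m)
    (X H Y : Module.End ℝ (Fin (k + 1) → Fin m → ℝ))
    (ι : Matrix (Fin m) (Fin m) ℝ →ₗ[ℝ] Module.End ℝ (Fin (k + 1) → Fin m → ℝ))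
    (hX : ∀ (i : Fin (k + 1)) (j : Fin m), X (basisVec k m i j) =
      if h : (i : ℕ) < k then basisVec k m (⟨(i : ℕ) + 1, by omega⟩ : Fin (k + 1)) j else 0)
    (hH : ∀ (i : Fin (k + 1)) (j : Fin m), H (basisVec k m i j) =
      ((k : ℝ) - 2 * (i : ℕ)) • basisVec k m i j)
    (hY : ∀ (i : Fin (k + 1)) (j : Fin m), Y (basisVec k m i j) =
      if h : 0 < (i : ℕ) then
        (((i : ℕ) : ℝ) * ((k : ℝ) + 1 - (i : ℕ))) •
          basisVec k m (⟨(i : ℕ) - 1, by omega⟩ : Fin (k + 1)) j else 0)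
    (hι : ∀ (A : Matrix (Fin m) (Fin m) ℝ) (i : Fin (k + 1)) (j : Fin m),
      ι A (basisVec k m i j) = ∑ l : Fin m, A l j • basisVec k m i l)
    (φ : (Fin (k + 1) → Fin m → ℝ) →ₗ[ℝ] Module.End ℝ (Fin (k + 1) → Fin m → ℝ))
    (hval : ∀ u, φ u ∈ Submodule.span ℝ ({X, H, Y} : Set (Module.End ℝ _)) ⊔
      LinearMap.range ι)
    (hsym : ∀ u v, φ u v = φ v u) :
    φ = 0 := by
  -- decomposition of each value of φ
  have hdecomp : ∀ u, ∃ (a b c : ℝ) (A : Matrix (Fin m) (Fin m) ℝ), φ u = a • X + b • H + c • Y + ι A := by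
    intro u
    obtain ⟨s, hs, t, ⟨A, rfl⟩, hst⟩ := Submodule.mem_sup.mp (hval u)
    obtain ⟨a, z, hz, rfl⟩ := Submodule.mem_span_insert.mp hs
    obtain ⟨b, c, rfl⟩ := Submodule.mem_span_pair.mp hz
    exact ⟨a, b, c, A, by rw [← hst]; abel⟩
  choose ca cb cc cA hdec using hdecomp
  -- coordinate evaluations of the generators
  have hXe : ∀ (i' p : Fin (k+1)) (j' q : Fin m), X (basisVec k m i' j') p q =
      if (i' : ℕ) < k ∧ (p : ℕ) = (i' : ℕ) + 1 ∧ q = j' then 1 else 0 := by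
    intro i' p j' q
    rw [hX]
    by_cases h : (i' : ℕ) < k
    · rw [dif_pos h, basisVec_apply]
      refine if_congr ?_ rfl rfl
      rw [Fin.ext_iff]
      simp only [Fin.val_mk]
      constructor
      · rintro ⟨hp, hq⟩; exact ⟨h, hp, hq⟩
      · rintro ⟨_, hp, hq⟩; exact ⟨hp, hq⟩
    · rw [dif_neg h, Pi.zero_apply, if_neg (fun hc => h hc.1)]; rfl
  have hHe : ∀ (i' p : Fin (k+1)) (j' q : Fin m), H (basisVec k m i' j') p q =
      if (p : ℕ) = (i' : ℕ) ∧ q = j' then (k : ℝ) - 2 * (i' : ℕ) else 0 := by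
    intro i' p j' q
    rw [hH]
    simp only [Pi.smul_apply, basisVec_apply, smul_eq_mul, mul_ite, mul_one, mul_zero]
    exact if_congr (and_congr (Fin.ext_iff) Iff.rfl) rfl rfl
  have hYe : ∀ (i' p : Fin (k+1)) (j' q : Fin m), Y (basisVec k m i' j') p q =
      if (p : ℕ) + 1 = (i' : ℕ) ∧ q = j'
        then ((i' : ℕ) : ℝ) * ((k : ℝ) + 1 - (i' : ℕ)) else 0 := by
    intro i' p j' q
    rw [hY]
    by_cases h : 0 < (i' : ℕ)
    · simp only [dif_pos h, Pi.smul_apply, basisVec_apply, smul_eq_mul, mul_ite, mul_one,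
        mul_zero]
      refine if_congr ?_ rfl rfl
      rw [Fin.ext_iff]
      simp only [Fin.val_mk]
      exact and_congr (by omega) Iff.rfl
    · rw [dif_neg h, Pi.zero_apply, if_neg (fun hc => by omega)]; rfl
  have hιe : ∀ (M : Matrix (Fin m) (Fin m) ℝ) (i' p : Fin (k+1)) (j' q : Fin m),
      ι M (basisVec k m i' j') p q = if (p : ℕ) = (i' : ℕ) then M q j' else 0 := by
    intro M i' p j' q
    rw [hι]
    simp only [Finset.sum_apply, Pi.smul_apply, basisVec_apply, smul_eq_mul,
      mul_ite, mul_one, mul_zero, ite_and]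
    by_cases h : (p : ℕ) = (i' : ℕ)
    · have h' : p = i' := Fin.ext h
      simp [h', Finset.sum_ite_eq]
    · have h' : p ≠ i' := fun e => h (by rw [e])
      simp [h, h']
  set w := basisVec k m with hw
  -- the master evaluation formula
  have hE : ∀ (i i' p : Fin (k+1)) (j j' q : Fin m),
      φ (w i j) (w i' j') p q =
        (if (i' : ℕ) < k ∧ (p : ℕ) = (i' : ℕ) + 1 ∧ q = j' then ca (w i j) else 0)
      + (if (p : ℕ) = (i' : ℕ) ∧ q = j'
          then cb (w i j) * ((k : ℝ) - 2 * (i' : ℕ)) else 0)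
      + (if (p : ℕ) + 1 = (i' : ℕ) ∧ q = j'
          then cc (w i j) * (((i' : ℕ) : ℝ) * ((k : ℝ) + 1 - (i' : ℕ))) else 0)
      + (if (p : ℕ) = (i' : ℕ) then cA (w i j) q j' else 0) := by
    intro i i' p j j' q
    rw [hdec (w i j)]
    simp only [LinearMap.add_apply, LinearMap.smul_apply, Pi.add_apply, Pi.smul_apply,
      smul_eq_mul, hXe, hHe, hYe, hιe, mul_ite, mul_one, mul_zero]
  -- the symmetry equations
  have hEq : ∀ (i i' p : Fin (k+1)) (j j' q : Fin m),
        (if (i' : ℕ) < k ∧ (p : ℕ) = (i' : ℕ) + 1 ∧ q = j' then ca (w i j) else 0)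
      + (if (p : ℕ) = (i' : ℕ) ∧ q = j'
          then cb (w i j) * ((k : ℝ) - 2 * (i' : ℕ)) else 0)
      + (if (p : ℕ) + 1 = (i' : ℕ) ∧ q = j'
          then cc (w i j) * (((i' : ℕ) : ℝ) * ((k : ℝ) + 1 - (i' : ℕ))) else 0)
      + (if (p : ℕ) = (i' : ℕ) then cA (w i j) q j' else 0)
      =
        (if (i : ℕ) < k ∧ (p : ℕ) = (i : ℕ) + 1 ∧ q = j then ca (w i' j') else 0)
      + (if (p : ℕ) = (i : ℕ) ∧ q = j
          then cb (w i' j') * ((k : ℝ) - 2 * (i : ℕ)) else 0)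
      + (if (p : ℕ) + 1 = (i : ℕ) ∧ q = j
          then cc (w i' j') * (((i : ℕ) : ℝ) * ((k : ℝ) + 1 - (i : ℕ))) else 0)
      + (if (p : ℕ) = (i : ℕ) then cA (w i' j') q j else 0) := by
    intro i i' p j j' q
    have h := congrFun (congrFun (hsym (w i j) (w i' j')) p) q
    rwa [hE, hE] at h
  -- a second column exists
  have hj2 : ∀ j : Fin m, ∃ j' : Fin m, j' ≠ j := by
    intro j
    by_cases h : (j : ℕ) = 0
    · exact ⟨⟨1, by omega⟩, by simp [Fin.ext_iff]; omega⟩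
    · exact ⟨⟨0, by omega⟩, by simp [Fin.ext_iff]; omega⟩
  -- Step 1 : the X-coefficients vanish
  have ha : ∀ (i : Fin (k+1)) (j : Fin m), ca (w i j) = 0 := by
    intro i j
    obtain ⟨j', hj'⟩ := hj2 j
    have hj'n : (j' : ℕ) ≠ (j : ℕ) := fun h => hj' (Fin.ext h)
    obtain ⟨r, hr1, hr2⟩ : ∃ r : ℕ, r ≤ 1 ∧ r + 1 ≠ (i : ℕ) := by
      by_cases h1 : (i : ℕ) = 1
      · exact ⟨1, by omega, by omega⟩
      · exact ⟨0, by omega, by omega⟩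
    have key := hEq i ⟨r, by omega⟩ ⟨r + 1, by omega⟩ j j' j'
    have hrk : r < k := by omega
    have f2 : ¬(r + 1 = r) := by omega
    have f3 : ¬(r + 1 + 1 = r) := by omega
    simp only [Fin.ext_iff, Fin.val_mk, hrk, hj'n, hr2, f2, f3, eq_self_iff_true,
      true_and, and_true, and_false, false_and, if_true, if_false, ite_true, ite_false,
      add_zero, zero_add] at key
    linarith [key]
  -- Step 2 : the Y-coefficients vanish
  have hc : ∀ (i : Fin (k+1)) (j : Fin m), cc (w i j) = 0 := by
    intro i j
    obtain ⟨j', hj'⟩ := hj2 j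
    have hj'n : (j' : ℕ) ≠ (j : ℕ) := fun h => hj' (Fin.ext h)
    obtain ⟨r, hr1, hr1', hr2⟩ : ∃ r : ℕ, 1 ≤ r ∧ r ≤ 2 ∧ r - 1 ≠ (i : ℕ) := by
      by_cases h0 : (i : ℕ) = 0
      · exact ⟨2, by omega, by omega, by omega⟩
      · exact ⟨1, by omega, by omega, by omega⟩
    have key := hEq i ⟨r, by omega⟩ ⟨r - 1, by omega⟩ j j' j'
    have f1 : ¬(r - 1 = r + 1) := by omega
    have f2 : ¬(r - 1 = r) := by omega
    have t3 : r - 1 + 1 = r := by omega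
    simp only [Fin.ext_iff, Fin.val_mk, hj'n, hr2, f1, f2, t3, eq_self_iff_true,
      true_and, and_true, and_false, false_and, if_true, if_false, ite_true, ite_false,
      add_zero, zero_add] at key
    have hkey : cc (w i j) * ((r : ℝ) * ((k : ℝ) + 1 - (r : ℝ))) = 0 := by
      linarith [key]
    have hkr : ((r : ℝ)) * ((k : ℝ) + 1 - (r : ℝ)) ≠ 0 := by
      have h1 : (1 : ℝ) ≤ (r : ℝ) := by exact_mod_cast hr1
      have h2 : (r : ℝ) ≤ 2 := by exact_mod_cast hr1'
      have h3 : (3 : ℝ) ≤ (k : ℝ) := by exact_mod_cast hk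
      have : (0 : ℝ) < (r : ℝ) * ((k : ℝ) + 1 - (r : ℝ)) := by nlinarith
      linarith
    exact (mul_eq_zero.mp hkey).resolve_right hkr
  -- auxiliary diagonal equation for Step 3
  have hrowEq : ∀ (i : Fin (k+1)) (j j' : Fin m), j' ≠ j → ∀ (r : Fin (k+1)),
      (r : ℕ) ≠ (i : ℕ) →
      cb (w i j) * ((k : ℝ) - 2 * (r : ℕ)) + cA (w i j) j' j' = 0 := by
    intro i j j' hj' r hri
    have hj'n : (j' : ℕ) ≠ (j : ℕ) := fun h => hj' (Fin.ext h)
    have key := hEq i r r j j' j'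
    have f1 : ¬((r : ℕ) = (r : ℕ) + 1) := by omega
    have f2 : ¬((r : ℕ) + 1 = (r : ℕ)) := by omega
    simp only [Fin.ext_iff, Fin.val_mk, hj'n, hri, f1, f2, eq_self_iff_true,
      true_and, and_true, and_false, false_and, if_true, if_false, ite_true, ite_false,
      add_zero, zero_add] at key
    linarith [key]
  -- Step 3 : the H-coefficients vanish
  have hb : ∀ (i : Fin (k+1)) (j : Fin m), cb (w i j) = 0 := by
    intro i j
    obtain ⟨j', hj'⟩ := hj2 j
    -- two distinct rows different from i
    obtain ⟨r, s, hrs, hs2, hri, hsi⟩ :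
        ∃ r s : ℕ, r < s ∧ s ≤ 2 ∧ r ≠ (i : ℕ) ∧ s ≠ (i : ℕ) := by
      by_cases h0 : (i : ℕ) = 0
      · exact ⟨1, 2, by omega, by omega, by omega, by omega⟩
      · by_cases h1 : (i : ℕ) = 1
        · exact ⟨0, 2, by omega, by omega, by omega, by omega⟩
        · exact ⟨0, 1, by omega, by omega, by omega, by omega⟩
    have e1 := hrowEq i j j' hj' ⟨r, by omega⟩ (by simpa using hri)
    have e2 := hrowEq i j j' hj' ⟨s, by omega⟩ (by simpa using hsi)
    simp only [Fin.val_mk] at e1 e2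
    have hsub : cb (w i j) * (2 * (s : ℝ) - 2 * (r : ℝ)) = 0 := by
      linear_combination e1 - e2
    have hne : (2 : ℝ) * (s : ℝ) - 2 * (r : ℝ) ≠ 0 := by
      have : (r : ℝ) < (s : ℝ) := by exact_mod_cast hrs
      linarith
    exact (mul_eq_zero.mp hsub).resolve_right hne
  -- Step 4 : the gl(m) parts vanish
  have hA0 : ∀ (i : Fin (k+1)) (j : Fin m) (q j' : Fin m), cA (w i j) q j' = 0 := by
    intro i j q j'
    obtain ⟨r, hrb, hri⟩ : ∃ r : ℕ, r ≤ 1 ∧ r ≠ (i : ℕ) := by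
      by_cases h0 : (i : ℕ) = 0
      · exact ⟨1, by omega, by omega⟩
      · exact ⟨0, by omega, by omega⟩
    have key := hEq i ⟨r, by omega⟩ ⟨r, by omega⟩ j j' q
    simp only [Fin.ext_iff, Fin.val_mk, ha, hb, hc, hri, zero_mul, ite_self,
      eq_self_iff_true, true_and, and_true, if_true, if_false, ite_true, ite_false,
      add_zero, zero_add] at key
    linarith [key]
  -- hence φ vanishes on every basis vector
  have hφw : ∀ (i : Fin (k+1)) (j : Fin m), φ (w i j) = 0 := by
    intro i j
    have hAz : cA (w i j) = 0 := by
      funext q j'; exact hA0 i j q j'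
    rw [hdec (w i j), ha, hb, hc, hAz, map_zero]
    simp
  -- conclude
  apply LinearMap.ext
  intro u
  conv_lhs => rw [basisVec_repr k m u]
  rw [map_sum]
  simp [hφw, ← hw]
end
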